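/- arXiv:0905.0796 — 4 statements merged into one kernel-verified Lean document; each statement's English description precedes it below -/
import Mathlib

section
/- Let α, β > 0 and let (α_n, β_n) be a sequence of pairs of positive parameters with (α_n, β_n) → (α, β). Then the minimizers x_{α_n,β_n} of Φ_{α_n,β_n} converge strongly in ℓ² to the minimizer x_{α,β} of Φ_{α,β}. -/
noncomputable section

open Filter Topology

/-- `ℓ²(ℕ, ℝ)`. -/
abbrev ltwo : Type := lp (fun _ : ℕ => ℝ) 2

/-- `x ∈ ℓ¹`. -/
def inL1 (x : ltwo) : Prop := Memℓp (fun i => x i) 1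

/-- The `ℓ¹`-norm `‖x‖_{ℓ¹} = ∑ |xᵢ|` (junk value if `x ∉ ℓ¹`). -/
noncomputable def l1norm (x : ltwo) : ℝ := ∑' i, |x i|

/-- The elastic-net functional `Φ_{α,β}(x) = ½‖Kx − y‖² + α‖x‖₁ + (β/2)‖x‖₂²`,
real-valued on its effective domain `ℓ¹ ∩ ℓ²` (the convention `Φ = +∞` off `ℓ¹` is
implemented by restricting all statements to `inL1`). -/
noncomputable def Phi {H : Type*} [NormedAddCommGroup H] [InnerProductSpace ℝ H]
    (K : ltwo →L[ℝ] H) (y : H) (α β : ℝ) (x : ltwo) : ℝ :=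
  (1 / 2) * ‖K x - y‖ ^ 2 + α * l1norm x + (β / 2) * ‖x‖ ^ 2

/-- `x` is a minimizer of `Φ_{α,β}` over `ℓ²` (with the `+∞` convention off `ℓ¹`). -/
def IsMinimizer {H : Type*} [NormedAddCommGroup H] [InnerProductSpace ℝ H]
    (K : ltwo →L[ℝ] H) (y : H) (α β : ℝ) (x : ltwo) : Prop :=
  inL1 x ∧ ∀ z : ltwo, inL1 z → Phi K y α β x ≤ Phi K y α β z

/-!
The parallelogram law makes `Φ_{α,β}` strongly convex along midpoints, so around its minimizer
`(β/4)‖z − x_{α,β}‖² ≤ Φ_{α,β}(z) − Φ_{α,β}(x_{α,β})`. For `z = xₙ` this gap is controlled by the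
minimality of `xₙ` for `Φ_{αₙ,βₙ}`, since `Φ_{α,β} − Φ_{αₙ,βₙ} = (α − αₙ)‖·‖₁ + ((β − βₙ)/2)‖·‖²`
and comparing with `0` bounds `‖xₙ‖₁ ≤ ‖y‖²/(2αₙ)` and `‖xₙ‖² ≤ ‖y‖²/βₙ`. The gap is therefore a
continuous function of `(αₙ, βₙ)` vanishing at `(α, β)`.
-/

section

variable {H : Type*} [NormedAddCommGroup H] [InnerProductSpace ℝ H]

lemma inL1.summable_abs {x : ltwo} (hx : inL1 x) : Summable fun i => |x i| := by
  simpa [Real.norm_eq_abs] using (memℓp_gen_iff (p := 1) one_pos).1 hx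

lemma inL1.add {x z : ltwo} (hx : inL1 x) (hz : inL1 z) : inL1 (x + z) := by
  unfold inL1; simpa only [lp.coeFn_add] using Memℓp.add hx hz

lemma inL1.const_smul {x : ltwo} (c : ℝ) (hx : inL1 x) : inL1 (c • x) := by
  unfold inL1; simpa only [lp.coeFn_smul] using Memℓp.const_smul hx c

lemma inL1_zero : inL1 0 := zero_memℓp

lemma l1norm_nonneg (x : ltwo) : 0 ≤ l1norm x :=
  tsum_nonneg fun _ => abs_nonneg _

@[simp] lemma l1norm_zero : l1norm 0 = 0 := by
  simp [l1norm]

lemma l1norm_smul (c : ℝ) (x : ltwo) : l1norm (c • x) = |c| * l1norm x := by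
  simp only [l1norm, lp.coeFn_smul, Pi.smul_apply, smul_eq_mul, abs_mul, tsum_mul_left]

lemma l1norm_add_le {x z : ltwo} (hx : inL1 x) (hz : inL1 z) :
    l1norm (x + z) ≤ l1norm x + l1norm z := by
  rw [l1norm, l1norm, l1norm, ← hx.summable_abs.tsum_add hz.summable_abs]
  exact (hx.add hz).summable_abs.tsum_le_tsum (fun i => abs_add_le (x i) (z i))
    (hx.summable_abs.add hz.summable_abs)

lemma norm_midpoint_sq {E : Type*} [NormedAddCommGroup E] [InnerProductSpace ℝ E] (u v : E) :
    ‖(2⁻¹ : ℝ) • (u + v)‖ ^ 2 = (‖u‖ ^ 2 + ‖v‖ ^ 2) / 2 - ‖u - v‖ ^ 2 / 4 := by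
  rw [norm_smul, mul_pow, Real.norm_of_nonneg (by norm_num : (0:ℝ) ≤ 2⁻¹)]
  linear_combination (1 / 4 : ℝ) * parallelogram_law_with_norm ℝ u v

lemma Phi_midpoint_le (K : ltwo →L[ℝ] H) (y : H) {α : ℝ} (β : ℝ) (hα : 0 ≤ α)
    {x z : ltwo} (hx : inL1 x) (hz : inL1 z) :
    Phi K y α β ((2⁻¹ : ℝ) • (x + z)) ≤
      (Phi K y α β x + Phi K y α β z) / 2 - β / 8 * ‖x - z‖ ^ 2 := by
  have hfit : ‖K ((2⁻¹ : ℝ) • (x + z)) - y‖ ^ 2 ≤ (‖K x - y‖ ^ 2 + ‖K z - y‖ ^ 2) / 2 := by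
    have h := norm_midpoint_sq (K x - y) (K z - y)
    rw [show (2⁻¹ : ℝ) • (K x - y + (K z - y)) = K ((2⁻¹ : ℝ) • (x + z)) - y by
      rw [map_smul, map_add]; module] at h
    nlinarith [sq_nonneg ‖K x - y - (K z - y)‖]
  have hl1 : l1norm ((2⁻¹ : ℝ) • (x + z)) ≤ (l1norm x + l1norm z) / 2 := by
    rw [l1norm_smul, abs_of_pos (by norm_num)]
    linarith [l1norm_add_le hx hz]
  simp only [Phi, norm_midpoint_sq x z]
  nlinarith [mul_le_mul_of_nonneg_left hl1 hα]

lemma IsMinimizer.sq_norm_sub_le {K : ltwo →L[ℝ] H} {y : H} {α β : ℝ} (hα : 0 ≤ α)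
    {xm : ltwo} (hmin : IsMinimizer K y α β xm) {z : ltwo} (hz : inL1 z) :
    β / 4 * ‖z - xm‖ ^ 2 ≤ Phi K y α β z - Phi K y α β xm := by
  have hmid := hmin.2 _ ((hmin.1.add hz).const_smul 2⁻¹)
  have hconvex := Phi_midpoint_le K y β hα hmin.1 hz
  rw [norm_sub_rev]
  linarith

lemma IsMinimizer.Phi_le_sq_norm_div_two {K : ltwo →L[ℝ] H} {y : H} {α β : ℝ} {x : ltwo}
    (hmin : IsMinimizer K y α β x) : Phi K y α β x ≤ ‖y‖ ^ 2 / 2 := by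
  simpa [Phi, div_eq_inv_mul] using hmin.2 0 inL1_zero

lemma IsMinimizer.l1norm_le {K : ltwo →L[ℝ] H} {y : H} {α β : ℝ} (hα : 0 < α) (hβ : 0 ≤ β)
    {x : ltwo} (hmin : IsMinimizer K y α β x) : l1norm x ≤ ‖y‖ ^ 2 / (2 * α) := by
  have hΦ := hmin.Phi_le_sq_norm_div_two
  rw [le_div_iff₀ (by positivity)]
  simp only [Phi] at hΦ
  nlinarith [sq_nonneg ‖K x - y‖, mul_nonneg hβ (sq_nonneg ‖x‖)]

lemma IsMinimizer.sq_norm_le {K : ltwo →L[ℝ] H} {y : H} {α β : ℝ} (hα : 0 ≤ α) (hβ : 0 < β)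
    {x : ltwo} (hmin : IsMinimizer K y α β x) : ‖x‖ ^ 2 ≤ ‖y‖ ^ 2 / β := by
  have hΦ := hmin.Phi_le_sq_norm_div_two
  rw [le_div_iff₀ hβ]
  simp only [Phi] at hΦ
  nlinarith [sq_nonneg ‖K x - y‖, mul_nonneg hα (l1norm_nonneg x)]

lemma Phi_sub_Phi (K : ltwo →L[ℝ] H) (y : H) (α β a b : ℝ) (x : ltwo) :
    Phi K y α β x - Phi K y a b x = (α - a) * l1norm x + (β - b) / 2 * ‖x‖ ^ 2 := by
  simp only [Phi]; ring

lemma mul_sub_le_abs_mul_add (c : ℝ) {p q P : ℝ} (hp : 0 ≤ p) (hq : 0 ≤ q) (hpP : p ≤ P) :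
    c * (p - q) ≤ |c| * (P + q) := by
  refine (le_abs_self _).trans ?_
  rw [abs_mul]
  exact mul_le_mul_of_nonneg_left (abs_sub_le_iff.2 ⟨by linarith, by linarith⟩) (abs_nonneg c)

lemma IsMinimizer.Phi_sub_le {K : ltwo →L[ℝ] H} {y : H} {a b : ℝ} (ha : 0 < a) (hb : 0 < b)
    {x : ltwo} (hmin : IsMinimizer K y a b x) (α β : ℝ) {z : ltwo} (hz : inL1 z) :
    Phi K y α β x - Phi K y α β z ≤
      |α - a| * (‖y‖ ^ 2 / (2 * a) + l1norm z) + |β - b| / 2 * (‖y‖ ^ 2 / b + ‖z‖ ^ 2) := by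
  have hx1 := hmin.l1norm_le ha hb.le
  have hx2 := hmin.sq_norm_le ha.le hb
  have hl1 := mul_sub_le_abs_mul_add (α - a) (l1norm_nonneg x) (l1norm_nonneg z) hx1
  have hl2 := mul_sub_le_abs_mul_add ((β - b) / 2) (sq_nonneg ‖x‖) (sq_nonneg ‖z‖) hx2
  rw [abs_div, abs_two] at hl2
  have hxz := hmin.2 z hz
  linarith [Phi_sub_Phi K y α β a b x, Phi_sub_Phi K y α β a b z]

end

/-- Stability: if `(αₙ, βₙ) → (α, β)` with all parameters positive, then the minimizers
`x_{αₙ,βₙ}` of `Φ_{αₙ,βₙ}` converge strongly in `ℓ²` to the minimizer `x_{α,β}` of `Φ_{α,β}`. -/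
theorem elasticNet_minimizers_stability
    {H : Type*} [NormedAddCommGroup H] [InnerProductSpace ℝ H]
    (K : ltwo →L[ℝ] H) (y : H) (α β : ℝ) (hα : 0 < α) (hβ : 0 < β)
    (αs βs : ℕ → ℝ) (hαs : ∀ n, 0 < αs n) (hβs : ∀ n, 0 < βs n)
    (hconv : Tendsto (fun n => (αs n, βs n)) atTop (nhds (α, β)))
    (xs : ℕ → ltwo) (hxs : ∀ n, IsMinimizer K y (αs n) (βs n) (xs n))
    (xlim : ltwo) (hxlim : IsMinimizer K y α β xlim) :
    Tendsto xs atTop (nhds xlim) := by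
  set gap : ℝ × ℝ → ℝ := fun p => |α - p.1| * (‖y‖ ^ 2 / (2 * p.1) + l1norm xlim) +
    |β - p.2| / 2 * (‖y‖ ^ 2 / p.2 + ‖xlim‖ ^ 2)
  have hgap : Tendsto (fun n => 4 / β * gap (αs n, βs n)) atTop (𝓝 0) := by
    have hcont : ContinuousAt gap (α, β) := by
      fun_prop (disch := positivity)
    simpa [gap] using (hcont.tendsto.comp hconv).const_mul (4 / β)
  have hsq : Tendsto (fun n => ‖xs n - xlim‖ ^ 2) atTop (𝓝 0) := by
    refine squeeze_zero (fun n => sq_nonneg _) (fun n => ?_) hgap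
    have hgrowth := hxlim.sq_norm_sub_le hα.le (hxs n).1
    have hbound := (hxs n).Phi_sub_le (hαs n) (hβs n) α β hxlim.1
    rw [div_mul_eq_mul_div, le_div_iff₀ hβ]
    simp only [gap]
    linarith
  rw [tendsto_iff_norm_sub_tendsto_zero]
  simpa [Real.sqrt_sq (norm_nonneg _)] using hsq.sqrt
end
end

section
/- Let η ≥ 0 and R_η(x) = η‖x‖_{ℓ¹} + (1/2)‖x‖_{ℓ²}². If a sequence (xⁿ) in ℓ² converges weakly to x* ∈ ℓ² and R_η(xⁿ) → R_η(x*) < ∞, then R_η(xⁿ − x*) → 0; in particular xⁿ → x* strongly in ℓ². -/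
/-!
Both summands of `R_η` are weakly sequentially lower semicontinuous: the `ℓ¹` part by Fatou's
lemma, since weak convergence gives coordinatewise convergence, and the quadratic part because
`⟪xⁿ, x*⟫ - ½‖x*‖² ≤ ½‖xⁿ‖²`. When a sum of two lower semicontinuous terms converges to its finite
value at the limit, each term converges separately. Convergence of the norms together with weak
convergence gives strong convergence, and convergence of the `ℓ¹` norms together with coordinatewise
convergence gives `‖xⁿ - x*‖₁ → 0` (Scheffé's lemma: the same splitting argument applied to
`|xⁿᵢ - x*ᵢ|` and `|xⁿᵢ| + |x*ᵢ| - |xⁿᵢ - x*ᵢ|`, whose sum converges to `2‖x*‖₁`).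
-/

noncomputable section

open Filter Topology
open scoped ENNReal

/-- The functional `R_η(x) = η‖x‖₁ + ½‖x‖₂²`, with values in `[0, ∞]`
(so `R_η(x) = +∞` if `η > 0` and `x ∉ ℓ¹`). -/
noncomputable def Rext (η : ℝ) (x : ltwo) : ℝ≥0∞ :=
  ENNReal.ofReal η * ∑' i, ENNReal.ofReal |x i| + ENNReal.ofReal ((1 / 2) * ‖x‖ ^ 2)

open scoped InnerProductSpace

namespace ENNReal

variable {α : Type*} {l : Filter α}

theorem limsup_add_liminf_le_limsup [l.NeBot] (u v : α → ℝ≥0∞) :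
    limsup u l + liminf v l ≤ limsup (u + v) l := by
  have hu_le : limsup u l ≤ limsup (u + v) l := limsup_le_limsup (.of_forall fun n => le_self_add)
  have hv_le : liminf v l ≤ limsup (u + v) l :=
    le_trans liminf_le_limsup (limsup_le_limsup (.of_forall fun n => le_add_self))
  rcases eq_or_ne (limsup u l) 0 with hu | hu
  · simpa [hu] using hv_le
  rcases eq_or_ne (liminf v l) 0 with hv | hv
  · simpa [hv] using hu_le
  by_contra! h
  obtain ⟨a, ha, b, hb, hab⟩ := exists_lt_add_of_lt_add h hu hv
  refine hab.not_ge (le_limsup_of_frequently_le ?_)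
  exact ((frequently_lt_of_lt_limsup (by isBoundedDefault) ha).and_eventually
    (eventually_lt_of_lt_liminf hb)).mono fun n hn => (ENNReal.add_lt_add hn.1 hn.2).le

theorem tendsto_of_tendsto_add_of_le_liminf [l.NeBot] {u v : α → ℝ≥0∞} {a b : ℝ≥0∞}
    (hb : b ≠ ∞) (huv : Tendsto (fun n => u n + v n) l (𝓝 (a + b)))
    (hu : a ≤ liminf u l) (hv : b ≤ liminf v l) : Tendsto u l (𝓝 a) := by
  refine tendsto_of_le_liminf_of_limsup_le hu ?_
  have : limsup u l + b ≤ a + b :=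
    calc limsup u l + b ≤ limsup u l + liminf v l := by gcongr
      _ ≤ limsup (u + v) l := limsup_add_liminf_le_limsup u v
      _ = a + b := huv.limsup_eq
  exact (ENNReal.add_le_add_iff_right hb).mp this

theorem tendsto_of_tendsto_const_mul {u : α → ℝ≥0∞} {a c : ℝ≥0∞} (hc₀ : c ≠ 0) (hc : c ≠ ∞)
    (h : Tendsto (fun n => c * u n) l (𝓝 (c * a))) : Tendsto u l (𝓝 a) := by
  simpa [← mul_assoc, ENNReal.inv_mul_cancel hc₀ hc] using
    ENNReal.Tendsto.const_mul h (.inr (ENNReal.inv_ne_top.2 hc₀))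

theorem tsum_le_liminf_tsum_of_tendsto {ι : Type*} [l.NeBot] [l.IsCountablyGenerated]
    {f : α → ι → ℝ≥0∞} {g : ι → ℝ≥0∞} (hfg : ∀ i, Tendsto (fun n => f n i) l (𝓝 (g i))) :
    ∑' i, g i ≤ liminf (fun n => ∑' i, f n i) l := by
  let _ : MeasurableSpace ι := ⊤
  simpa only [MeasureTheory.lintegral_count' measurable_from_top, fun i => (hfg i).liminf_eq]
    using MeasureTheory.lintegral_liminf_le (μ := MeasureTheory.Measure.count) (u := l)
      fun n => measurable_from_top (f := f n)

end ENNReal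

theorem tendsto_tsum_enorm_sub_of_tendsto_tsum_enorm {α ι E : Type*} [SeminormedAddCommGroup E]
    {l : Filter α} [l.NeBot] [l.IsCountablyGenerated] {f : α → ι → E} {g : ι → E}
    (hfg : ∀ i, Tendsto (fun n => f n i) l (𝓝 (g i))) (hg : ∑' i, ‖g i‖ₑ ≠ ∞)
    (hsum : Tendsto (fun n => ∑' i, ‖f n i‖ₑ) l (𝓝 (∑' i, ‖g i‖ₑ))) :
    Tendsto (fun n => ∑' i, ‖f n i - g i‖ₑ) l (𝓝 0) := by
  set G : α → ι → ℝ≥0∞ := fun n i => ‖f n i‖ₑ + ‖g i‖ₑ - ‖f n i - g i‖ₑ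
  have hsplit : ∀ n, ∑' i, ‖f n i - g i‖ₑ + ∑' i, G n i = ∑' i, ‖f n i‖ₑ + ∑' i, ‖g i‖ₑ := by
    intro n
    rw [← ENNReal.tsum_add, ← ENNReal.tsum_add]
    exact tsum_congr fun i => add_tsub_cancel_of_le enorm_sub_le
  have hG : ∀ i, Tendsto (fun n => G n i) l (𝓝 (‖g i‖ₑ + ‖g i‖ₑ)) := by
    intro i
    have hdiff : Tendsto (fun n => ‖f n i - g i‖ₑ) l (𝓝 0) := by
      simpa [enorm_eq_nnnorm] using ((hfg i).sub_const (g i)).enorm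
    simpa using ENNReal.Tendsto.sub ((hfg i).enorm.add_const ‖g i‖ₑ) hdiff
      (.inl (by finiteness))
  have hG_liminf : ∑' i, ‖g i‖ₑ + ∑' i, ‖g i‖ₑ ≤ liminf (fun n => ∑' i, G n i) l := by
    rw [← ENNReal.tsum_add]
    exact ENNReal.tsum_le_liminf_tsum_of_tendsto hG
  refine ENNReal.tendsto_of_tendsto_add_of_le_liminf (by finiteness) ?_ zero_le hG_liminf
  simpa only [zero_add, hsplit] using hsum.add_const (∑' i, ‖g i‖ₑ)

theorem tendsto_const_mul_tsum_enorm_sub_of_tendsto {α ι E : Type*} [SeminormedAddCommGroup E]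
    {l : Filter α} [l.NeBot] [l.IsCountablyGenerated] {f : α → ι → E} {g : ι → E} {c : ℝ≥0∞}
    (hc : c ≠ ∞) (hfg : ∀ i, Tendsto (fun n => f n i) l (𝓝 (g i)))
    (hg : c * ∑' i, ‖g i‖ₑ ≠ ∞)
    (hsum : Tendsto (fun n => c * ∑' i, ‖f n i‖ₑ) l (𝓝 (c * ∑' i, ‖g i‖ₑ))) :
    Tendsto (fun n => c * ∑' i, ‖f n i - g i‖ₑ) l (𝓝 0) := by
  rcases eq_or_ne c 0 with rfl | hc₀
  · simp
  simpa using ENNReal.Tendsto.const_mul (tendsto_tsum_enorm_sub_of_tendsto_tsum_enorm hfg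
    (ENNReal.lt_top_of_mul_ne_top_right hg hc₀).ne
    (ENNReal.tendsto_of_tendsto_const_mul hc₀ hc hsum)) (.inr hc)

section InnerProductSpace

variable {α E : Type*} [NormedAddCommGroup E] [InnerProductSpace ℝ E] {l : Filter α}
  {u : α → E} {x : E}

theorem inner_sub_half_norm_sq_le (y x : E) : ⟪y, x⟫_ℝ - 1 / 2 * ‖x‖ ^ 2 ≤ 1 / 2 * ‖y‖ ^ 2 := by
  nlinarith [norm_sub_sq_real y x, sq_nonneg ‖y - x‖]

theorem le_liminf_ofReal_half_norm_sq [l.NeBot]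
    (hin : Tendsto (fun n => ⟪u n, x⟫_ℝ) l (𝓝 (‖x‖ ^ 2))) :
    ENNReal.ofReal (1 / 2 * ‖x‖ ^ 2) ≤ liminf (fun n => ENNReal.ofReal (1 / 2 * ‖u n‖ ^ 2)) l := by
  have hlim : Tendsto (fun n => ENNReal.ofReal (⟪u n, x⟫_ℝ - 1 / 2 * ‖x‖ ^ 2)) l
      (𝓝 (ENNReal.ofReal (1 / 2 * ‖x‖ ^ 2))) := by
    refine ENNReal.tendsto_ofReal ?_
    convert hin.sub_const (1 / 2 * ‖x‖ ^ 2) using 2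
    ring
  rw [← hlim.liminf_eq]
  exact liminf_le_liminf (.of_forall fun n =>
    ENNReal.ofReal_le_ofReal (inner_sub_half_norm_sq_le (u n) x))

theorem tendsto_of_tendsto_inner_of_tendsto_norm_sq
    (hin : Tendsto (fun n => ⟪u n, x⟫_ℝ) l (𝓝 (‖x‖ ^ 2)))
    (hnorm : Tendsto (fun n => ‖u n‖ ^ 2) l (𝓝 (‖x‖ ^ 2))) : Tendsto u l (𝓝 x) := by
  have hsq : Tendsto (fun n => ‖u n - x‖ ^ 2) l (𝓝 0) := by
    have h := (hnorm.sub (hin.const_mul 2)).add_const (‖x‖ ^ 2)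
    simp only [← norm_sub_sq_real] at h
    convert h using 2
    ring
  rw [tendsto_iff_norm_sub_tendsto_zero]
  simpa [Real.sqrt_sq (norm_nonneg _)] using hsq.sqrt

end InnerProductSpace

theorem lp.tendsto_apply_of_tendsto_inner {α ι : Type*} {l : Filter α}
    {u : α → lp (fun _ : ι => ℝ) 2} {x : lp (fun _ : ι => ℝ) 2}
    (h : ∀ z, Tendsto (fun n => ⟪u n, z⟫_ℝ) l (𝓝 ⟪x, z⟫_ℝ)) (i : ι) :
    Tendsto (fun n => u n i) l (𝓝 (x i)) := by
  classical
  simpa [lp.inner_single_right] using h (lp.single 2 i 1)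

theorem Rfunctional_weak_convergence_to_strong_general
    (η : ℝ) (xs : ℕ → ltwo) (xstar : ltwo)
    (hweak : ∀ z : ltwo,
      Tendsto (fun n => (inner ℝ (xs n) z : ℝ)) atTop (nhds (inner ℝ xstar z)))
    (hfin : Rext η xstar < ⊤)
    (hR : Tendsto (fun n => Rext η (xs n)) atTop (nhds (Rext η xstar))) :
    Tendsto (fun n => Rext η (xs n - xstar)) atTop (nhds 0) ∧
      Tendsto xs atTop (nhds xstar) := by
  set c := ENNReal.ofReal η
  set S : ltwo → ℝ≥0∞ := fun x => ∑' i, ‖x i‖ₑ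
  set Q : ltwo → ℝ≥0∞ := fun x => ENNReal.ofReal (1 / 2 * ‖x‖ ^ 2)
  have hRext : ∀ x, Rext η x = c * S x + Q x := fun x => by
    simp [Rext, S, Q, c, Real.enorm_eq_ofReal_abs]
  simp only [hRext] at hR hfin ⊢
  have hcS_fin : c * S xstar ≠ ∞ := (ENNReal.add_lt_top.1 hfin).1.ne
  have hpt := lp.tendsto_apply_of_tendsto_inner hweak
  have hin : Tendsto (fun n => ⟪xs n, xstar⟫_ℝ) atTop (𝓝 (‖xstar‖ ^ 2)) := by
    simpa [real_inner_self_eq_norm_sq] using hweak xstar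
  have hcS_liminf : c * S xstar ≤ liminf (fun n => c * S (xs n)) atTop := by
    rw [ENNReal.liminf_const_mul_of_ne_top ENNReal.ofReal_ne_top]
    gcongr
    exact ENNReal.tsum_le_liminf_tsum_of_tendsto fun i => (hpt i).enorm
  have hQ_liminf : Q xstar ≤ liminf (fun n => Q (xs n)) atTop := le_liminf_ofReal_half_norm_sq hin
  have hcS := ENNReal.tendsto_of_tendsto_add_of_le_liminf ENNReal.ofReal_ne_top hR hcS_liminf
    hQ_liminf
  have hQ := ENNReal.tendsto_of_tendsto_add_of_le_liminf hcS_fin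
    (v := fun n => c * S (xs n)) (by simpa only [add_comm] using hR) hQ_liminf hcS_liminf
  have hnorm : Tendsto (fun n => ‖xs n‖ ^ 2) atTop (𝓝 (‖xstar‖ ^ 2)) := by
    simpa [Q, Function.comp_def, ← mul_assoc] using
      ((ENNReal.tendsto_toReal ENNReal.ofReal_ne_top).comp hQ).const_mul 2
  have hstrong := tendsto_of_tendsto_inner_of_tendsto_norm_sq hin hnorm
  have hQ_sub : Tendsto (fun n => Q (xs n - xstar)) atTop (𝓝 0) := by
    simpa using ENNReal.tendsto_ofReal
      (((tendsto_iff_norm_sub_tendsto_zero.1 hstrong).pow 2).const_mul (1 / 2))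
  refine ⟨?_, hstrong⟩
  simpa [S, c] using
    (tendsto_const_mul_tsum_enorm_sub_of_tendsto ENNReal.ofReal_ne_top hpt hcS_fin hcS).add hQ_sub

/-- If `xⁿ ⇀ x*` weakly in `ℓ²` and `R_η(xⁿ) → R_η(x*) < ∞`, then
`R_η(xⁿ − x*) → 0`; in particular `xⁿ → x*` strongly in `ℓ²`. -/
theorem Rfunctional_weak_convergence_to_strong
    (η : ℝ) (hη : 0 ≤ η) (xs : ℕ → ltwo) (xstar : ltwo)
    (hweak : ∀ z : ltwo,
      Tendsto (fun n => (inner ℝ (xs n) z : ℝ)) atTop (nhds (inner ℝ xstar z)))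
    (hfin : Rext η xstar < ⊤)
    (hR : Tendsto (fun n => Rext η (xs n)) atTop (nhds (Rext η xstar))) :
    Tendsto (fun n => Rext η (xs n - xstar)) atTop (nhds 0) ∧
      Tendsto xs atTop (nhds xstar) :=
  Rfunctional_weak_convergence_to_strong_general η xs xstar hweak hfin hR
end
end

section
/- Let x_η denote the R_η-minimizing solution of Kx = y†. Then η ↦ ‖x_η‖_{ℓ¹} is monotonically decreasing and η ↦ ‖x_η‖_{ℓ²}² is monotonically increasing, in the sense that for all η₁, η₂ ≥ 0: (‖x_{η₁}‖_{ℓ¹} − ‖x_{η₂}‖_{ℓ¹})(η₁ − η₂) ≤ 0 and (‖x_{η₁}‖_{ℓ²}² − ‖x_{η₂}‖_{ℓ²}²)(η₁ − η₂) ≥ 0. -/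
/-!
Testing the minimality of `x_{η₁}` against `x_{η₂}` and vice versa and adding the two
inequalities cancels the `ℓ²` terms and leaves `(η₁ - η₂)(‖x_{η₁}‖₁ - ‖x_{η₂}‖₁) ≤ 0`.
The same two inequalities trap the difference of the `ℓ²` terms between `η₂` and `η₁` times
`‖x_{η₂}‖₁ - ‖x_{η₁}‖₁`, whose sign against `η₁ - η₂` is now known.
-/

noncomputable section

open Filter Topology

/-- The functional `R_η(x) = η‖x‖₁ + ½‖x‖₂²` (finite on `ℓ¹ ∩ ℓ²`). -/
noncomputable def Rfun (η : ℝ) (x : ltwo) : ℝ := η * l1norm x + (1 / 2) * ‖x‖ ^ 2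

/-- `x†` is the `R_η`-minimizing solution of `Kx = y†`: it solves the equation and
minimizes `R_η` among all solutions in `ℓ¹ ∩ ℓ²`. -/
def IsRMinSolution {H : Type*} [NormedAddCommGroup H] [InnerProductSpace ℝ H]
    (K : ltwo →L[ℝ] H) (ydag : H) (η : ℝ) (xdag : ltwo) : Prop :=
  inL1 xdag ∧ K xdag = ydag ∧
    ∀ z : ltwo, inL1 z → K z = ydag → Rfun η xdag ≤ Rfun η z

section MinimizersOfWeightedSums

variable {α : Type*} {f g : α → ℝ} {s : Set α} {a b : α} {η₁ η₂ : ℝ}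

theorem sub_mul_sub_nonpos_of_isMinOn_mul_add
    (ha : IsMinOn (fun x => η₁ * f x + g x) s a) (hb : IsMinOn (fun x => η₂ * f x + g x) s b)
    (has : a ∈ s) (hbs : b ∈ s) :
    (f a - f b) * (η₁ - η₂) ≤ 0 := by
  have hab : η₁ * f a + g a ≤ η₁ * f b + g b := ha hbs
  have hba : η₂ * f b + g b ≤ η₂ * f a + g a := hb has
  linarith

theorem sub_mul_sub_nonneg_of_isMinOn_mul_add
    (ha : IsMinOn (fun x => η₁ * f x + g x) s a) (hb : IsMinOn (fun x => η₂ * f x + g x) s b)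
    (has : a ∈ s) (hbs : b ∈ s) (hη₁ : 0 ≤ η₁) (hη₂ : 0 ≤ η₂) :
    0 ≤ (g a - g b) * (η₁ - η₂) := by
  have hab : η₁ * f a + g a ≤ η₁ * f b + g b := ha hbs
  have hba : η₂ * f b + g b ≤ η₂ * f a + g a := hb has
  have hupper : g a - g b ≤ η₁ * (f b - f a) := by linarith
  have hlower : η₂ * (f b - f a) ≤ g a - g b := by linarith
  have hf : 0 ≤ (f b - f a) * (η₁ - η₂) := by
    linarith [sub_mul_sub_nonpos_of_isMinOn_mul_add ha hb has hbs]
  rcases le_total η₂ η₁ with h | h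
  · calc 0 ≤ η₂ * ((f b - f a) * (η₁ - η₂)) := mul_nonneg hη₂ hf
      _ = η₂ * (f b - f a) * (η₁ - η₂) := by ring
      _ ≤ (g a - g b) * (η₁ - η₂) := mul_le_mul_of_nonneg_right hlower (sub_nonneg.2 h)
  · calc 0 ≤ η₁ * ((f b - f a) * (η₁ - η₂)) := mul_nonneg hη₁ hf
      _ = η₁ * (f b - f a) * (η₁ - η₂) := by ring
      _ ≤ (g a - g b) * (η₁ - η₂) := mul_le_mul_of_nonpos_right hupper (sub_nonpos.2 h)

end MinimizersOfWeightedSums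

section RMinSolution

variable {H : Type*} [NormedAddCommGroup H] [InnerProductSpace ℝ H]

def l1Solutions (K : ltwo →L[ℝ] H) (ydag : H) : Set ltwo :=
  {z | inL1 z ∧ K z = ydag}

variable {K : ltwo →L[ℝ] H} {ydag : H} {η : ℝ} {x : ltwo}

theorem IsRMinSolution.mem_l1Solutions (hx : IsRMinSolution K ydag η x) :
    x ∈ l1Solutions K ydag :=
  ⟨hx.1, hx.2.1⟩

theorem IsRMinSolution.isMinOn (hx : IsRMinSolution K ydag η x) :
    IsMinOn (Rfun η) (l1Solutions K ydag) x :=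
  fun z hz => hx.2.2 z hz.1 hz.2

end RMinSolution

/-- Monotonicity of the value functions: `η ↦ ‖x_η‖₁` is monotonically decreasing and
`η ↦ ‖x_η‖₂²` is monotonically increasing. -/
theorem RMinSolution_norm_monotonicity
    {H : Type*} [NormedAddCommGroup H] [InnerProductSpace ℝ H]
    (K : ltwo →L[ℝ] H) (ydag : H)
    (xsol : ℝ → ltwo) (hxsol : ∀ η : ℝ, 0 ≤ η → IsRMinSolution K ydag η (xsol η))
    (η₁ η₂ : ℝ) (hη₁ : 0 ≤ η₁) (hη₂ : 0 ≤ η₂) :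
    (l1norm (xsol η₁) - l1norm (xsol η₂)) * (η₁ - η₂) ≤ 0 ∧
      (‖xsol η₁‖ ^ 2 - ‖xsol η₂‖ ^ 2) * (η₁ - η₂) ≥ 0 := by
  have h₁ := hxsol η₁ hη₁
  have h₂ := hxsol η₂ hη₂
  refine ⟨sub_mul_sub_nonpos_of_isMinOn_mul_add h₁.isMinOn h₂.isMinOn
    h₁.mem_l1Solutions h₂.mem_l1Solutions, ?_⟩
  have hhalf := sub_mul_sub_nonneg_of_isMinOn_mul_add (g := fun x : ltwo => 1 / 2 * ‖x‖ ^ 2)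
    h₁.isMinOn h₂.isMinOn h₁.mem_l1Solutions h₂.mem_l1Solutions hη₁ hη₂
  linarith
end
end

section
/- Assume x† with Kx† = y† has finite support, satisfies the source condition K*w = x† + ηξ for some w ∈ H, η > 0 and ξ ∈ ∂‖·‖_{ℓ¹}(x†), and that K has the finite basis injectivity property; let c₁, c₂ > 0 be constants with R_η(x) − R_η(x†) ≥ c₁‖x − x†‖_{ℓ²} − c₂‖K(x − x†)‖ for all x. If ‖y^δ − y†‖ ≤ δ, then the minimizer x_{α,β}^δ of Φ_{α,β} with α = ηβ satisfies ‖x_{α,β}^δ − x†‖_{ℓ²} ≤ δ²/(2c₁β) + c₂²β/(2c₁) + c₂δ/c₁. -/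
noncomputable section

open Filter Topology

/-- `K` has the finite basis injectivity property. -/
def FBI {H : Type*} [NormedAddCommGroup H] [InnerProductSpace ℝ H]
    (K : ltwo →L[ℝ] H) : Prop :=
  ∀ I : Finset ℕ, ∀ u v : ltwo, K u = K v →
    (∀ i ∉ I, u i = 0) → (∀ i ∉ I, v i = 0) → u = v

/-!
Comparing `Φ_{ηβ,β}` at its minimizer `x` with its value at `x†` gives
`β (R_η(x) − R_η(x†)) ≤ ½δ² − ½‖Kx − y^δ‖²`. The lower bound on `R_η(x) − R_η(x†)` turns this
into an estimate for `‖x − x†‖`, in which the residual `t = ‖Kx − y^δ‖` enters through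
`‖K(x − x†)‖ ≤ t + δ`; maximizing `−½t² + c₂βt` over `t` leaves the term `c₂²β²/2`.
-/

theorem Phi_mul_eq_half_sq_add_mul_Rfun {H : Type*} [NormedAddCommGroup H]
    [InnerProductSpace ℝ H]
    (K : ltwo →L[ℝ] H) (y : H) (η β : ℝ) (x : ltwo) :
    Phi K y (η * β) β x = 1 / 2 * ‖K x - y‖ ^ 2 + β * Rfun η x := by
  unfold Phi Rfun
  ring

theorem IsMinimizer.half_sq_add_mul_Rfun_le {H : Type*} [NormedAddCommGroup H]
    [InnerProductSpace ℝ H] {K : ltwo →L[ℝ] H} {y : H} {η β : ℝ} {x : ltwo}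
    (hx : IsMinimizer K y (η * β) β x) {z : ltwo} (hz : inL1 z) :
    1 / 2 * ‖K x - y‖ ^ 2 + β * Rfun η x ≤ 1 / 2 * ‖K z - y‖ ^ 2 + β * Rfun η z := by
  simpa only [Phi_mul_eq_half_sq_add_mul_Rfun] using hx.2 z hz

/-- Here `e`, `k`, `t` stand for `‖x − x†‖`, `‖K(x − x†)‖` and the residual `‖Kx − y^δ‖`. -/
theorem le_of_mul_sub_le_half_sq_sub {e k t δ β c₁ c₂ : ℝ} (hβ : 0 < β) (hc₁ : 0 < c₁)
    (hc₂ : 0 ≤ c₂) (hk : k ≤ t + δ) (h : β * (c₁ * e - c₂ * k) ≤ δ ^ 2 / 2 - t ^ 2 / 2) :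
    e ≤ δ ^ 2 / (2 * c₁ * β) + c₂ ^ 2 * β / (2 * c₁) + c₂ * δ / c₁ := by
  have hβc₂k : β * c₂ * k ≤ β * c₂ * (t + δ) := mul_le_mul_of_nonneg_left hk (by positivity)
  have hyoung : -(t ^ 2 / 2) + β * c₂ * t ≤ (β * c₂) ^ 2 / 2 := by
    nlinarith [sq_nonneg (t - β * c₂)]
  have key : (2 * c₁ * β) * e ≤ δ ^ 2 + c₂ ^ 2 * β ^ 2 + 2 * c₂ * δ * β := by
    nlinarith
  have hrhs : δ ^ 2 / (2 * c₁ * β) + c₂ ^ 2 * β / (2 * c₁) + c₂ * δ / c₁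
      = (δ ^ 2 + c₂ ^ 2 * β ^ 2 + 2 * c₂ * δ * β) / (2 * c₁ * β) := by
    field_simp
  rw [hrhs, le_div_iff₀ (by positivity)]
  linarith

theorem elasticNet_improved_convergence_rate_general
    {H : Type*} [NormedAddCommGroup H] [InnerProductSpace ℝ H]
    (K : ltwo →L[ℝ] H)
    (ydag ydelta : H) (δ : ℝ)
    (xdag : ltwo) (hxdag1 : inL1 xdag) (hKxdag : K xdag = ydag)
    (hnoise : ‖ydelta - ydag‖ ≤ δ)
    (η : ℝ)
    (c₁ c₂ : ℝ) (hc₁ : 0 < c₁) (hc₂ : 0 < c₂)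
    (hlower : ∀ x : ltwo, inL1 x →
      c₁ * ‖x - xdag‖ - c₂ * ‖K (x - xdag)‖ ≤ Rfun η x - Rfun η xdag)
    (β : ℝ) (hβ : 0 < β)
    (x : ltwo) (hx : IsMinimizer K ydelta (η * β) β x) :
    ‖x - xdag‖ ≤ δ ^ 2 / (2 * c₁ * β) + c₂ ^ 2 * β / (2 * c₁) + c₂ * δ / c₁ := by
  have hdata : ‖K xdag - ydelta‖ ≤ δ := by rwa [hKxdag, norm_sub_rev]
  have hdata_sq : ‖K xdag - ydelta‖ ^ 2 ≤ δ ^ 2 := pow_le_pow_left₀ (norm_nonneg _) hdata 2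
  have hresidual : ‖K (x - xdag)‖ ≤ ‖K x - ydelta‖ + δ := by
    rw [map_sub, hKxdag]
    linarith [norm_sub_le_norm_sub_add_norm_sub (K x) ydelta ydag]
  have hcompare := hx.half_sq_add_mul_Rfun_le hxdag1
  have hlower_x := mul_le_mul_of_nonneg_left (hlower x hx.1) hβ.le
  exact le_of_mul_sub_le_half_sq_sub hβ hc₁ hc₂.le hresidual (by linarith)

/-- Improved a priori convergence rate for sparse solutions: under the source
condition, sparsity, the finite basis injectivity property and the lower bound
`R_η(x) − R_η(x†) ≥ c₁‖x − x†‖₂ − c₂‖K(x − x†)‖`, the minimizer of `Φ_{ηβ,β}` with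
noisy data satisfies `‖x_{α,β}^δ − x†‖₂ ≤ δ²/(2c₁β) + c₂²β/(2c₁) + c₂δ/c₁`. -/
theorem elasticNet_improved_convergence_rate
    {H : Type*} [NormedAddCommGroup H] [InnerProductSpace ℝ H] [CompleteSpace H]
    (K : ltwo →L[ℝ] H) (hFBI : FBI K)
    (ydag ydelta : H) (δ : ℝ)
    (xdag : ltwo) (hxdag1 : inL1 xdag) (hKxdag : K xdag = ydag)
    (hsparse : {i : ℕ | xdag i ≠ 0}.Finite)
    (hnoise : ‖ydelta - ydag‖ ≤ δ)
    (η : ℝ) (hη : 0 < η) (w : H) (ξ : ℕ → ℝ)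
    (hξ1 : ∀ i, xdag i ≠ 0 → ξ i = Real.sign (xdag i))
    (hξ2 : ∀ i, |ξ i| ≤ 1)
    (hsource : ∀ i, (ContinuousLinearMap.adjoint K w) i = xdag i + η * ξ i)
    (c₁ c₂ : ℝ) (hc₁ : 0 < c₁) (hc₂ : 0 < c₂)
    (hlower : ∀ x : ltwo, inL1 x →
      c₁ * ‖x - xdag‖ - c₂ * ‖K (x - xdag)‖ ≤ Rfun η x - Rfun η xdag)
    (β : ℝ) (hβ : 0 < β)
    (x : ltwo) (hx : IsMinimizer K ydelta (η * β) β x) :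
    ‖x - xdag‖ ≤ δ ^ 2 / (2 * c₁ * β) + c₂ ^ 2 * β / (2 * c₁) + c₂ * δ / c₁ :=
  elasticNet_improved_convergence_rate_general K ydag ydelta δ xdag hxdag1 hKxdag hnoise η c₁ c₂ hc₁
    hc₂ hlower β hβ x hx
end
end
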